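/- arXiv:2505.22371 — 3 statements merged into one kernel-verified Lean document; each statement's English description precedes it below -/
import Mathlib

section
/- Let $U_{(1)} \ge U_{(2)} \ge \dots \ge U_{(n)}$ be the decreasing order statistics of $n$ i.i.d. standard uniform random variables, and let $1 \le k \le n-1$. Then for every $\delta \in (0,1)$, with probability at least $1-\delta$, $1 - U_{(k+1)} \le \frac{k+1}{n}\left(1 + \sqrt{\frac{3\log(1/\delta)}{k+1}} + \frac{3\log(1/\delta)}{k+1}\right)$. -/
open MeasureTheory ProbabilityTheory Real

lemma aux_exp_quad {a : ℝ} (ha : a ≤ 0) : Real.exp a ≤ 1 + a + a ^ 2 / 2 := by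
  have h1 : 1 + (-a) + (-a) ^ 2 / 2 ≤ Real.exp (-a) :=
    Real.quadratic_le_exp_of_nonneg (by linarith)
  have h2 : Real.exp a * Real.exp (-a) = 1 := by
    rw [← Real.exp_add]; simp
  have h3 := Real.exp_pos a
  have h4 := Real.exp_pos (-a)
  have e : (-a) ^ 2 = a ^ 2 := by ring
  rw [e] at h1
  have h1' : 1 - a + a ^ 2 / 2 ≤ Real.exp (-a) := by linarith
  have hq : 0 < 1 - a + a ^ 2 / 2 := by nlinarith [sq_nonneg (a - 1)]
  have h5 : Real.exp a * (1 - a + a ^ 2 / 2) ≤ 1 := by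
    calc Real.exp a * (1 - a + a ^ 2 / 2) ≤ Real.exp a * Real.exp (-a) :=
          mul_le_mul_of_nonneg_left h1' h3.le
      _ = 1 := h2
  nlinarith [h5, hq, sq_nonneg (a ^ 2)]

lemma aux_count {n : ℕ} (f g : Fin n → ℝ) (σ : Equiv.Perm (Fin n))
    (hσ : ∀ i, g i = f (σ i)) (hanti : Antitone g) (k : ℕ) (hk : k < n) (c : ℝ) :
    c ≤ g ⟨k, hk⟩ ↔ k + 1 ≤ (Finset.univ.filter (fun i => c ≤ f i)).card := by
  classical
  have hcard : (Finset.univ.filter fun i => c ≤ g i).card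
      = (Finset.univ.filter fun i => c ≤ f i).card := by
    refine Finset.card_equiv σ (fun i => ?_)
    simp [hσ i]
  rw [← hcard]
  constructor
  · intro h
    have hsub : Finset.Iic (⟨k, hk⟩ : Fin n) ⊆ Finset.univ.filter fun i => c ≤ g i := by
      intro i hi
      simp only [Finset.mem_Iic] at hi
      simp only [Finset.mem_filter, Finset.mem_univ, true_and]
      exact le_trans h (hanti hi)
    have := Finset.card_le_card hsub
    rwa [Fin.card_Iic] at this
  · intro h
    by_contra hc
    push_neg at hc
    have hsub : (Finset.univ.filter fun i => c ≤ g i) ⊆ Finset.Iio (⟨k, hk⟩ : Fin n) := by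
      intro i hi
      simp only [Finset.mem_filter, Finset.mem_univ, true_and] at hi
      simp only [Finset.mem_Iio]
      by_contra hik
      push_neg at hik
      exact absurd (le_trans hi (hanti hik)) (not_le.mpr hc)
    have := Finset.card_le_card hsub
    rw [Fin.card_Iio] at this
    simp only [Fin.val_mk] at this
    omega

set_option maxHeartbeats 2000000 in
/-- Concentration of the (k+1)-th largest uniform order statistic. -/
theorem stmt_7 {Ω : Type*} [MeasureSpace Ω] [IsProbabilityMeasure (ℙ : Measure Ω)]
    (n : ℕ) (hn : 2 ≤ n) (U : Fin n → Ω → ℝ)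
    (hmeas : ∀ i, Measurable (U i))
    (hindep : iIndepFun U ℙ)
    (hunif : ∀ i, Measure.map (U i) ℙ = (volume.restrict (Set.Ioo (0:ℝ) 1)))
    -- `Uo i` is the (i+1)-th largest among the `U j`'s:
    (Uo : Fin n → Ω → ℝ)
    (hord : ∀ ω, ∃ σ : Equiv.Perm (Fin n),
      (∀ i, Uo i ω = U (σ i) ω) ∧ Antitone fun i => Uo i ω)
    (k : ℕ) (hk1 : 1 ≤ k) (hk2 : k ≤ n - 1)
    (δ : ℝ) (hδ0 : 0 < δ) (hδ1 : δ < 1) :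
    ENNReal.ofReal (1 - δ) ≤
      ℙ {ω | 1 - Uo ⟨k, by omega⟩ ω ≤
        ((k : ℝ) + 1) / n *
          (1 + Real.sqrt (3 * Real.log (1 / δ) / ((k : ℝ) + 1)) +
            3 * Real.log (1 / δ) / ((k : ℝ) + 1))} := by
  classical
  have hkn : k < n := by omega
  set L : ℝ := Real.log (1 / δ) with hLdef
  have hL : 0 < L := Real.log_pos (one_lt_one_div hδ0 hδ1)
  set K : ℝ := (k : ℝ) + 1 with hKdef
  have hK2 : (2 : ℝ) ≤ K := by
    have : (1 : ℝ) ≤ (k : ℝ) := by exact_mod_cast hk1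
    rw [hKdef]; linarith
  have hK0 : (0 : ℝ) < K := by linarith
  have hn0 : (0 : ℝ) < (n : ℝ) := by positivity
  set x : ℝ := 3 * L / K with hxdef
  have hx0 : 0 < x := by positivity
  set s : ℝ := Real.sqrt x with hsdef
  have hs0 : 0 ≤ s := Real.sqrt_nonneg x
  have hs2 : s ^ 2 = x := Real.sq_sqrt hx0.le
  set t : ℝ := K / n * (1 + s + x) with htdef
  have ht0 : 0 < t := by positivity
  have hkK : (k : ℝ) < K := by rw [hKdef]; linarith
  have hKne : K ≠ 0 := ne_of_gt hK0
  have hLval : L = x * K / 3 := by rw [hxdef]; field_simp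
  clear_value L K x s t
  -- the event
  by_cases ht1 : 1 ≤ t
  · -- trivial case: t ≥ 1, the event holds a.s.
    set A : Set Ω := {ω | ∀ i, 0 < U i ω} with hAdef
    have hAsub : A ⊆ {ω | 1 - Uo ⟨k, by omega⟩ ω ≤ t} := by
      intro ω hω
      obtain ⟨σ, hσ, -⟩ := hord ω
      have : 0 < Uo ⟨k, hkn⟩ ω := by rw [hσ]; exact hω _
      simp only [Set.mem_setOf_eq]
      linarith
    have hAc : ℙ Aᶜ = 0 := by
      have h1 : ∀ i, ℙ {ω | ¬ 0 < U i ω} = 0 := by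
        intro i
        have : {ω | ¬ 0 < U i ω} = U i ⁻¹' (Set.Iic 0) := by
          ext ω; simp
        rw [this, ← Measure.map_apply (hmeas i) measurableSet_Iic, hunif i,
          Measure.restrict_apply measurableSet_Iic]
        have h2 : Set.Iic (0:ℝ) ∩ Set.Ioo 0 1 = ∅ := by
          ext u
          simp only [Set.mem_inter_iff, Set.mem_Iic, Set.mem_Ioo, Set.mem_empty_iff_false,
            iff_false, not_and]
          intro h1 h2; linarith
        rw [h2, measure_empty]
      have : ∀ᵐ ω ∂ℙ, ∀ i, 0 < U i ω := by
        rw [MeasureTheory.ae_all_iff]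
        intro i
        rw [MeasureTheory.ae_iff]
        exact h1 i
      rwa [MeasureTheory.ae_iff] at this
    calc ENNReal.ofReal (1 - δ) ≤ 1 := by
          rw [← ENNReal.ofReal_one]; exact ENNReal.ofReal_le_ofReal (by linarith)
      _ ≤ ℙ {ω | 1 - Uo ⟨k, by omega⟩ ω ≤ t} + ℙ {ω | 1 - Uo ⟨k, by omega⟩ ω ≤ t}ᶜ := by
          rw [← measure_univ (μ := (ℙ : Measure Ω))]
          exact measure_univ_le_add_compl _
      _ = ℙ {ω | 1 - Uo ⟨k, by omega⟩ ω ≤ t} := by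
          have : ℙ {ω | 1 - Uo ⟨k, by omega⟩ ω ≤ t}ᶜ = 0 :=
            measure_mono_null (Set.compl_subset_compl.mpr hAsub) hAc
          rw [this, add_zero]
  · push_neg at ht1
    set c : ℝ := 1 - t with hcdef
    have hc0 : 0 < c := by linarith
    have hc1 : c < 1 := by linarith
    clear_value c
    -- Bernoulli variables
    set f : ℝ → ℝ := fun u => if c ≤ u then 1 else 0 with hfdef
    have hfm : Measurable f := Measurable.ite measurableSet_Ici measurable_const measurable_const
    set X : Fin n → Ω → ℝ := fun i => f ∘ U i with hXdef
    have hXm : ∀ i, Measurable (X i) := fun i => hfm.comp (hmeas i)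
    have hXindep : iIndepFun X ℙ := hindep.comp (fun _ => f) fun _ => hfm
    set S : Ω → ℝ := ∑ i : Fin n, X i with hSdef
    have hSm : Measurable S := by
      rw [hSdef]
      have heq : (∑ i : Fin n, X i) = fun ω => ∑ i : Fin n, X i ω := by
        funext ω; exact Finset.sum_apply ω Finset.univ X
      rw [heq]
      exact Finset.measurable_sum _ fun i _ => hXm i
    have hS_apply : ∀ ω, S ω = ∑ i : Fin n, X i ω := fun ω => Finset.sum_apply ω Finset.univ X
    have hS_nonneg : ∀ ω, 0 ≤ S ω := by
      intro ω
      rw [hS_apply]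
      refine Finset.sum_nonneg fun i _ => ?_
      simp only [hXdef, hfdef, Function.comp_apply]
      split <;> norm_num
    -- probability of success
    have hp : ∀ i, ℙ (U i ⁻¹' Set.Ici c) = ENNReal.ofReal t := by
      intro i
      rw [← Measure.map_apply (hmeas i) measurableSet_Ici, hunif i,
        Measure.restrict_apply measurableSet_Ici]
      have : Set.Ici c ∩ Set.Ioo 0 1 = Set.Ico c 1 := by
        ext u
        simp only [Set.mem_inter_iff, Set.mem_Ici, Set.mem_Ioo, Set.mem_Ico]
        constructor
        · rintro ⟨h1, _, h3⟩; exact ⟨h1, h3⟩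
        · rintro ⟨h1, h2⟩; exact ⟨h1, lt_of_lt_of_le hc0 h1, h2⟩
      rw [this, Real.volume_Ico]
      congr 1
      rw [hcdef]; ring
    -- Chernoff parameter
    set np : ℝ := (n : ℝ) * t with hnpdef
    have hnp_eq : np = K * (1 + s + x) := by
      rw [hnpdef, htdef]
      field_simp
    have hnp_pos : 0 < np := by
      rw [hnp_eq]
      nlinarith [mul_nonneg hK0.le hs0, mul_nonneg hK0.le hx0.le]
    clear_value np
    have hnp_ne : np ≠ 0 := ne_of_gt hnp_pos
    have hknp : (k : ℝ) < np := by
      have : K ≤ np := by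
        rw [hnp_eq]
        nlinarith [mul_nonneg hK0.le hs0, mul_nonneg hK0.le hx0.le]
      linarith
    set lam : ℝ := -((np - k) / np) with hlamdef
    clear_value lam
    have hlam_neg : lam ≤ 0 := by
      rw [hlamdef]
      have h0 : 0 ≤ (np - k) / np := div_nonneg (by linarith) hnp_pos.le
      linarith
    -- mgf of each Bernoulli
    have hmgf_i : ∀ i : Fin n, mgf (X i) ℙ lam = t * (Real.exp lam - 1) + 1 := by
      intro i
      have hAi : MeasurableSet (U i ⁻¹' Set.Ici c) := (hmeas i) measurableSet_Ici
      have hfun : (fun ω => Real.exp (lam * X i ω))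
          = fun ω => Set.indicator (U i ⁻¹' Set.Ici c) (fun _ => Real.exp lam - 1) ω + 1 := by
        funext ω
        by_cases h : c ≤ U i ω
        · rw [Set.indicator_of_mem (by simpa using h)]
          simp only [hXdef, hfdef, Function.comp_apply, if_pos h, mul_one]
          try ring
        · rw [Set.indicator_of_notMem (by simpa using h)]
          simp only [hXdef, hfdef, Function.comp_apply, if_neg h, mul_zero, Real.exp_zero]
          try ring
      rw [mgf, hfun, integral_add ((integrable_const _).indicator hAi) (integrable_const 1),
        integral_indicator_const _ hAi, integral_const, measureReal_def, measureReal_def, hp i, measure_univ,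
        ENNReal.toReal_ofReal ht0.le]
      simp [mul_comm]
    -- integrability of exp (lam * S)
    have hint : Integrable (fun ω => Real.exp (lam * S ω)) ℙ := by
      refine Integrable.mono' (integrable_const 1)
        ((hSm.const_mul lam).exp.aestronglyMeasurable) (ae_of_all _ fun ω => ?_)
      rw [Real.norm_eq_abs, abs_of_pos (Real.exp_pos _), ← Real.exp_zero]
      apply Real.exp_le_exp.mpr
      have := hS_nonneg ω
      nlinarith
    -- Chernoff bound
    have hchern : (ℙ {ω | S ω ≤ (k : ℝ)}).toReal ≤ δ := by
      have h1 := measure_le_le_exp_mul_mgf (X := S) (μ := ℙ) (k : ℝ) hlam_neg hint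
      have h2 : mgf S ℙ lam = (t * (Real.exp lam - 1) + 1) ^ n := by
        rw [hSdef, hXindep.mgf_sum hXm]
        simp only [hmgf_i]
        rw [Finset.prod_const, Finset.card_univ, Fintype.card_fin]
      have hbase0 : 0 ≤ t * (Real.exp lam - 1) + 1 := by
        nlinarith [mul_nonneg ht0.le (Real.exp_pos lam).le]
      have hbase : t * (Real.exp lam - 1) + 1 ≤ Real.exp (t * (lam + lam ^ 2 / 2)) := by
        have hq := aux_exp_quad hlam_neg
        have h' : Real.exp lam - 1 ≤ lam + lam ^ 2 / 2 := by linarith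
        have : t * (Real.exp lam - 1) + 1 ≤ t * (lam + lam ^ 2 / 2) + 1 := by
          have := mul_le_mul_of_nonneg_left h' ht0.le
          linarith
        exact this.trans (Real.add_one_le_exp _)
      have h3 : (t * (Real.exp lam - 1) + 1) ^ n ≤ Real.exp (np * (lam + lam ^ 2 / 2)) := by
        calc (t * (Real.exp lam - 1) + 1) ^ n
            ≤ (Real.exp (t * (lam + lam ^ 2 / 2))) ^ n := pow_le_pow_left₀ hbase0 hbase n
          _ = Real.exp ((n : ℝ) * (t * (lam + lam ^ 2 / 2))) := (Real.exp_nat_mul _ n).symm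
          _ = Real.exp (np * (lam + lam ^ 2 / 2)) := by rw [hnpdef]; ring_nf
      have h4 : Real.exp (-lam * k) * mgf S ℙ lam
          ≤ Real.exp (-lam * k + np * (lam + lam ^ 2 / 2)) := by
        rw [Real.exp_add, h2]
        exact mul_le_mul_of_nonneg_left h3 (Real.exp_pos _).le
      have h5 : -lam * k + np * (lam + lam ^ 2 / 2) = -((np - k) ^ 2 / (2 * np)) := by
        rw [hlamdef]
        field_simp
        ring
      have h6 : Real.exp (-((np - k) ^ 2 / (2 * np))) ≤ δ := by
        rw [show δ = Real.exp (Real.log δ) from (Real.exp_log hδ0).symm, Real.exp_le_exp]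
        have hLlog : L = -Real.log δ := by
          rw [hLdef, one_div, Real.log_inv]
        have key : L ≤ (np - k) ^ 2 / (2 * np) := by
          rw [le_div_iff₀ (by positivity)]
          have hkval : (k : ℝ) = K - 1 := by rw [hKdef]; ring
          rw [hkval, hnp_eq, hLval, ← hs2]
          nlinarith [mul_nonneg hK0.le hs0, mul_nonneg hK0.le (sq_nonneg s),
            sq_nonneg (K * s), mul_nonneg (sq_nonneg (K * s)) hs0,
            mul_nonneg (sq_nonneg (K * s)) (sq_nonneg s)]
        linarith
      calc (ℙ {ω | S ω ≤ (k : ℝ)}).toReal ≤ Real.exp (-lam * k) * mgf S ℙ lam := h1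
        _ ≤ Real.exp (-lam * k + np * (lam + lam ^ 2 / 2)) := h4
        _ = Real.exp (-((np - k) ^ 2 / (2 * np))) := by rw [h5]
        _ ≤ δ := h6
    -- identify the event
    have hev : {ω | 1 - Uo ⟨k, by omega⟩ ω ≤ t} = {ω | S ω ≤ (k : ℝ)}ᶜ := by
      ext ω
      obtain ⟨σ, hσ, hanti⟩ := hord ω
      simp only [Set.mem_setOf_eq, Set.mem_compl_iff, not_le]
      have hScard : S ω = ((Finset.univ.filter (fun i => c ≤ U i ω)).card : ℝ) := by
        rw [hS_apply]
        simp only [hXdef, hfdef, Function.comp_apply]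
        rw [Finset.sum_boole]
      constructor
      · intro h
        have hle : c ≤ Uo ⟨k, hkn⟩ ω := by linarith
        have := (aux_count (fun i => U i ω) (fun i => Uo i ω) σ hσ hanti k hkn c).mp hle
        rw [hScard]
        exact_mod_cast Nat.lt_of_lt_of_le (Nat.lt_succ_self k) this
      · intro h
        have hcard : k + 1 ≤ (Finset.univ.filter (fun i => c ≤ U i ω)).card := by
          rw [hScard] at h
          exact_mod_cast Nat.succ_le_of_lt (by exact_mod_cast h)
        have := (aux_count (fun i => U i ω) (fun i => Uo i ω) σ hσ hanti k hkn c).mpr hcard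
        linarith
    rw [hev]
    have hmeasA : MeasurableSet {ω | S ω ≤ (k : ℝ)} := measurableSet_le hSm measurable_const
    rw [measure_compl hmeasA (measure_ne_top _ _), measure_univ]
    have hPA : ℙ {ω | S ω ≤ (k : ℝ)} ≤ ENNReal.ofReal δ := by
      rw [← ENNReal.ofReal_toReal (measure_ne_top ℙ _)]
      exact ENNReal.ofReal_le_ofReal hchern
    calc ENNReal.ofReal (1 - δ) = 1 - ENNReal.ofReal δ := by
          rw [ENNReal.ofReal_sub 1 hδ0.le, ENNReal.ofReal_one]
      _ ≤ 1 - ℙ {ω | S ω ≤ (k : ℝ)} := tsub_le_tsub_left hPA 1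
end

section
/- Fix $s \in (0,1)$ and define $r(z) = z - \lfloor z^s \rfloor^{1/s}$ for $z \ge 1$. Then $r(z) \ge 0$ for all $z \ge 1$, and $\liminf_{z \to \infty} \frac{r(z)}{s^{-1} z^{1-s}} = 0$ while $\limsup_{z \to \infty} \frac{r(z)}{s^{-1} z^{1-s}} = 1$. -/
open Real Filter Topology

private lemma bern_up {p : ℝ} (hp : 1 ≤ p) {a : ℝ} (ha : 1 ≤ a) :
    (a+1)^p - a^p ≤ p * (a+1)^(p-1) := by
  have ha1 : (0:ℝ) < a + 1 := by linarith
  have ht1 : 1/(a+1) ≤ 1 := by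
    rw [div_le_one ha1]; linarith
  have hb := one_add_mul_self_le_rpow_one_add (s := -(1/(a+1))) (by linarith) hp
  have he : (1 : ℝ) + -(1/(a+1)) = a/(a+1) := by field_simp; ring
  rw [he] at hb
  have hmul := mul_le_mul_of_nonneg_right hb (le_of_lt (rpow_pos_of_pos ha1 p))
  have h1 : (a/(a+1))^p * (a+1)^p = a^p := by
    rw [← Real.mul_rpow (by positivity) ha1.le, div_mul_cancel₀ _ ha1.ne']
  have h2 : (1/(a+1)) * (a+1)^p = (a+1)^(p-1) := by
    rw [Real.rpow_sub_one ha1.ne']; field_simp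
  nlinarith [rpow_pos_of_pos ha1 p, rpow_pos_of_pos ha1 (p-1)]

private lemma bern_low {p : ℝ} (hp : 1 ≤ p) {a c : ℝ} (ha : 1 ≤ a) (hc : 0 ≤ c) :
    a^p + p * c * a^(p-1) ≤ (a+c)^p := by
  have ha0 : (0:ℝ) < a := by linarith
  have hca : (0:ℝ) ≤ c/a := by positivity
  have hb := one_add_mul_self_le_rpow_one_add (s := c/a) (by linarith) hp
  have hmul := mul_le_mul_of_nonneg_right hb (le_of_lt (rpow_pos_of_pos ha0 p))
  have h1 : (1 + c/a)^p * a^p = (a+c)^p := by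
    rw [← Real.mul_rpow (by linarith) ha0.le]
    congr 1
    field_simp
  have h2 : (c/a) * a^p = c * a^(p-1) := by
    rw [Real.rpow_sub_one ha0.ne']; field_simp
  nlinarith

/-- Discrepancy function in the counter-example construction:
`r(z) = z - ⌊z^s⌋^{1/s}` is nonnegative, with liminf 0 and limsup 1
of `r(z)/(s⁻¹ z^{1-s})`. -/
theorem stmt_14 (s : ℝ) (hs0 : 0 < s) (hs1 : s < 1)
    (r : ℝ → ℝ)
    (hr : ∀ z, 1 ≤ z → r z = z - ((⌊z ^ s⌋ : ℝ)) ^ (1 / s)) :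
    (∀ z, 1 ≤ z → 0 ≤ r z) ∧
    Filter.liminf (fun z => r z / (s⁻¹ * z ^ (1 - s))) atTop = 0 ∧
    Filter.limsup (fun z => r z / (s⁻¹ * z ^ (1 - s))) atTop = 1 := by
  set p : ℝ := 1/s with hpdef
  have hp1 : 1 < p := by rw [hpdef, lt_div_iff₀ hs0]; linarith
  have hp0 : (0:ℝ) < p := by linarith
  have hsinv : s⁻¹ = p := (one_div s).symm
  have hsp : s * p = 1 := by rw [hpdef]; field_simp
  have hps : p * s = 1 := by rw [mul_comm]; exact hsp
  have hp1s : p * (1-s) = p - 1 := by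
    have : p * (1-s) = p - p * s := by ring
    rw [this, hps]
  -- master decomposition for arbitrary z ≥ 1
  have key : ∀ z : ℝ, 1 ≤ z → ∃ n : ℕ, 1 ≤ n ∧ (n:ℝ) ≤ z ^ s ∧ z ^ s < (n:ℝ) + 1 ∧
      (n:ℝ) ^ p ≤ z ∧ z < ((n:ℝ)+1) ^ p ∧ r z = z - (n:ℝ) ^ p := by
    intro z hz
    have hz0 : (0:ℝ) < z := by linarith
    have hzs1 : (1:ℝ) ≤ z ^ s := Real.one_le_rpow hz hs0.le
    have hfl : 1 ≤ ⌊z ^ s⌋ := by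
      rw [Int.le_floor]; exact_mod_cast hzs1
    have hnz : ((⌊z ^ s⌋.toNat : ℕ) : ℝ) = ((⌊z ^ s⌋ : ℤ) : ℝ) := by
      exact_mod_cast congrArg (Int.cast : ℤ → ℝ) (Int.toNat_of_nonneg (by linarith))
    refine ⟨⌊z ^ s⌋.toNat, by omega, ?_, ?_, ?_, ?_, ?_⟩
    · rw [hnz]; exact Int.floor_le _
    · rw [hnz]; exact Int.lt_floor_add_one _
    · calc ((⌊z ^ s⌋.toNat : ℕ) : ℝ) ^ p ≤ (z ^ s) ^ p := by
            apply Real.rpow_le_rpow (Nat.cast_nonneg _) _ hp0.le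
            rw [hnz]; exact Int.floor_le _
        _ = z := by rw [← Real.rpow_mul hz0.le, hsp, Real.rpow_one]
    · have hlt : z ^ s < ((⌊z ^ s⌋.toNat : ℕ) : ℝ) + 1 := by
        rw [hnz]; exact Int.lt_floor_add_one _
      calc z = (z ^ s) ^ p := by rw [← Real.rpow_mul hz0.le, hsp, Real.rpow_one]
        _ < (((⌊z ^ s⌋.toNat : ℕ) : ℝ) + 1) ^ p := Real.rpow_lt_rpow (by positivity) hlt hp0
    · rw [hr z hz, ← hnz]
  -- exact values at points of the form (n+c)^p
  have keyL : ∀ n : ℕ, 1 ≤ n → ∀ c : ℝ, 0 ≤ c → c < 1 →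
      1 ≤ ((n:ℝ)+c) ^ p ∧ r (((n:ℝ)+c) ^ p) = ((n:ℝ)+c) ^ p - (n:ℝ) ^ p := by
    intro n hn c hc0 hc1
    have hn1 : (1:ℝ) ≤ (n:ℝ) := by exact_mod_cast hn
    have hb0 : (1:ℝ) ≤ (n:ℝ) + c := by linarith
    have hz1 : 1 ≤ ((n:ℝ)+c) ^ p := Real.one_le_rpow hb0 hp0.le
    have hzs : (((n:ℝ)+c) ^ p) ^ s = (n:ℝ) + c := by
      rw [← Real.rpow_mul (by linarith), hps, Real.rpow_one]
    have hfloor : ⌊(n:ℝ)+c⌋ = (n:ℤ) := by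
      rw [Int.floor_eq_iff]
      constructor <;> push_cast <;> linarith
    refine ⟨hz1, ?_⟩
    rw [hr _ hz1, hzs, hfloor]
    push_cast
    ring
  -- nonnegativity
  have hnonneg : ∀ z, 1 ≤ z → 0 ≤ r z := by
    intro z hz
    obtain ⟨n, hn, _, _, hnp, _, hrz⟩ := key z hz
    rw [hrz]; linarith
  have hdenpos : ∀ z : ℝ, 1 ≤ z → 0 < s⁻¹ * z ^ (1-s) := by
    intro z hz
    have hz0 : (0:ℝ) < z := by linarith
    positivity
  -- upper bound
  have haveU : ∀ z : ℝ, 1 ≤ z → ∃ n : ℕ, 1 ≤ n ∧ (n:ℝ) ≤ z ^ s ∧ z ^ s < (n:ℝ) + 1 ∧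
      r z / (s⁻¹ * z ^ (1-s)) ≤ (1 + 1/(n:ℝ)) ^ (p-1) := by
    intro z hz
    obtain ⟨n, hn, hle, hlt, hnp, hznp, hrz⟩ := key z hz
    refine ⟨n, hn, hle, hlt, ?_⟩
    have hn1 : (1:ℝ) ≤ (n:ℝ) := by exact_mod_cast hn
    have hn0 : (0:ℝ) < (n:ℝ) := by linarith
    have hz0 : (0:ℝ) < z := by linarith
    have hnum : r z ≤ p * ((n:ℝ)+1) ^ (p-1) := by
      have hb := bern_up hp1.le hn1
      rw [hrz]; linarith
    have hden : p * (n:ℝ) ^ (p-1) ≤ s⁻¹ * z ^ (1-s) := by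
      have h1 : ((n:ℝ) ^ p) ^ (1-s) ≤ z ^ (1-s) :=
        Real.rpow_le_rpow (by positivity) hnp (by linarith)
      have h2 : ((n:ℝ) ^ p) ^ (1-s) = (n:ℝ) ^ (p-1) := by
        rw [← Real.rpow_mul (by positivity), hp1s]
      rw [hsinv]
      have := mul_le_mul_of_nonneg_left h1 hp0.le
      rw [h2] at this
      exact this
    have hdiv := div_le_div₀ (by positivity) hnum (by positivity) hden
    calc r z / (s⁻¹ * z ^ (1-s)) ≤ p * ((n:ℝ)+1) ^ (p-1) / (p * (n:ℝ) ^ (p-1)) := hdiv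
      _ = (1 + 1/(n:ℝ)) ^ (p-1) := by
          rw [mul_div_mul_left _ _ hp0.ne', ← Real.div_rpow (by positivity) hn0.le]
          congr 1
          field_simp
  -- basic tendsto fact
  have tU : Tendsto (fun n : ℕ => (1 + 1/(n:ℝ)) ^ (p-1)) atTop (𝓝 1) := by
    have h1 : Tendsto (fun n : ℕ => 1 + 1/(n:ℝ)) atTop (𝓝 (1+0)) :=
      tendsto_const_nhds.add tendsto_one_div_atTop_nhds_zero_nat
    rw [add_zero] at h1
    have h2 := h1.rpow_const (p := p-1) (Or.inl one_ne_zero)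
    simpa using h2
  -- eventual upper bound
  have evLE : ∀ ε : ℝ, 0 < ε → ∀ᶠ z in atTop, r z / (s⁻¹ * z ^ (1-s)) ≤ 1 + ε := by
    intro ε hε
    obtain ⟨N, hN⟩ := eventually_atTop.mp (tU.eventually_le_const (by linarith : (1:ℝ) < 1+ε))
    filter_upwards [eventually_ge_atTop (((N:ℝ)+1) ^ p), eventually_ge_atTop 1] with z hzN hz1
    obtain ⟨n, hn, hle, hlt, hbd⟩ := haveU z hz1
    have hNz : (N:ℝ) + 1 ≤ z ^ s := by
      calc (N:ℝ) + 1 = (((N:ℝ)+1) ^ p) ^ s := by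
            rw [← Real.rpow_mul (by positivity), hps, Real.rpow_one]
        _ ≤ z ^ s := Real.rpow_le_rpow (by positivity) hzN hs0.le
    have hNn : N ≤ n := by
      have : (N:ℝ) < (n:ℝ) + 1 - 1 + 1 := by push_cast; linarith
      have h2 : (N:ℝ) < (n:ℝ) + 1 := by linarith
      have : N < n + 1 := by exact_mod_cast h2
      omega
    exact hbd.trans (hN n hNn)
  -- eventual nonnegativity
  have evGE0 : ∀ᶠ z in atTop, 0 ≤ r z / (s⁻¹ * z ^ (1-s)) := by
    filter_upwards [eventually_ge_atTop 1] with z hz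
    exact div_nonneg (hnonneg z hz) (hdenpos z hz).le
  -- boundedness
  have bddA : IsBoundedUnder (· ≤ ·) atTop (fun z => r z / (s⁻¹ * z ^ (1-s))) :=
    ⟨2, eventually_map.mpr (by filter_upwards [evLE 1 one_pos] with z h; linarith)⟩
  have bddB : IsBoundedUnder (· ≥ ·) atTop (fun z => r z / (s⁻¹ * z ^ (1-s))) :=
    ⟨0, eventually_map.mpr evGE0⟩
  -- frequently zero
  have freq0 : ∃ᶠ z in atTop, r z / (s⁻¹ * z ^ (1-s)) ≤ 0 := by
    rw [frequently_atTop]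
    intro M
    set n : ℕ := max 1 ⌈M⌉₊ with hndef
    have hn : 1 ≤ n := le_max_left _ _
    have hn1 : (1:ℝ) ≤ (n:ℝ) := by exact_mod_cast hn
    obtain ⟨hz1, hrz⟩ := keyL n hn 0 le_rfl one_pos
    refine ⟨((n:ℝ)+0) ^ p, ?_, ?_⟩
    · have h1 : (n:ℝ) ≤ ((n:ℝ)+0) ^ p := by
        rw [add_zero]
        calc (n:ℝ) = (n:ℝ) ^ (1:ℝ) := (Real.rpow_one _).symm
          _ ≤ (n:ℝ) ^ p := Real.rpow_le_rpow_of_exponent_le hn1 hp1.le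
      have h2 : M ≤ (n:ℝ) := by
        calc M ≤ (⌈M⌉₊ : ℝ) := Nat.le_ceil M
          _ ≤ (n:ℝ) := by exact_mod_cast le_max_right 1 ⌈M⌉₊
      linarith
    · rw [hrz]
      simp
  -- frequently close to 1
  have freq1 : ∀ ε : ℝ, 0 < ε → ε ≤ 1/2 →
      ∃ᶠ z in atTop, 1 - ε ≤ r z / (s⁻¹ * z ^ (1-s)) := by
    intro ε hε hε2
    set c : ℝ := 1 - ε/2 with hcdef
    have hc0 : 0 < c := by rw [hcdef]; linarith
    have hc1 : c < 1 := by rw [hcdef]; linarith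
    have hB : (1:ℝ) < c / (1-ε) := by
      rw [lt_div_iff₀ (by linarith)]
      rw [hcdef]; linarith
    obtain ⟨N, hN⟩ := eventually_atTop.mp (tU.eventually_le_const hB)
    rw [frequently_atTop]
    intro M
    set n : ℕ := max (max 1 N) ⌈M⌉₊ with hndef
    have hn : 1 ≤ n := le_trans (le_max_left 1 N) (le_max_left _ _)
    have hnN : N ≤ n := le_trans (le_max_right 1 N) (le_max_left _ _)
    have hn1 : (1:ℝ) ≤ (n:ℝ) := by exact_mod_cast hn
    have hn0 : (0:ℝ) < (n:ℝ) := by linarith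
    obtain ⟨hz1, hrz⟩ := keyL n hn c hc0.le hc1
    refine ⟨((n:ℝ)+c) ^ p, ?_, ?_⟩
    · -- the point is ≥ M
      have h1 : (n:ℝ) ≤ ((n:ℝ)+c) ^ p := by
        calc (n:ℝ) = (n:ℝ) ^ (1:ℝ) := (Real.rpow_one _).symm
          _ ≤ (n:ℝ) ^ p := Real.rpow_le_rpow_of_exponent_le hn1 hp1.le
          _ ≤ ((n:ℝ)+c) ^ p := Real.rpow_le_rpow (by positivity) (by linarith) hp0.le
      have h2 : M ≤ (n:ℝ) := by
        calc M ≤ (⌈M⌉₊ : ℝ) := Nat.le_ceil M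
          _ ≤ (n:ℝ) := by exact_mod_cast le_max_right (max 1 N) ⌈M⌉₊
      linarith
    · -- the value is ≥ 1 - ε
      have hden_eq : s⁻¹ * (((n:ℝ)+c) ^ p) ^ (1-s) = p * ((n:ℝ)+c) ^ (p-1) := by
        rw [hsinv, ← Real.rpow_mul (by linarith), hp1s]
      have hA1 : (1:ℝ) ≤ (1 + 1/(n:ℝ)) ^ (p-1) :=
        Real.one_le_rpow (le_add_of_nonneg_right (by positivity)) (by linarith)
      have hApos : (0:ℝ) < (1 + 1/(n:ℝ)) ^ (p-1) := by linarith
      have hAle := hN n hnN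
      -- claim1 : (n/(n+1))^(p-1) = ((1+1/n)^(p-1))⁻¹
      have claim1 : ((n:ℝ)/((n:ℝ)+1)) ^ (p-1) = ((1 + 1/(n:ℝ)) ^ (p-1))⁻¹ := by
        rw [← Real.inv_rpow (by positivity)]
        congr 1
        rw [one_add_div hn0.ne', inv_div]
      have claim2 : 1 - ε ≤ c * ((n:ℝ)/((n:ℝ)+1)) ^ (p-1) := by
        rw [claim1]
        have hinv : (c/(1-ε))⁻¹ ≤ ((1 + 1/(n:ℝ)) ^ (p-1))⁻¹ := by
          apply inv_anti₀ hApos hAle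
        have heq : c * (c/(1-ε))⁻¹ = 1 - ε := by
          field_simp
        calc 1 - ε = c * (c/(1-ε))⁻¹ := heq.symm
          _ ≤ c * ((1 + 1/(n:ℝ)) ^ (p-1))⁻¹ := by
              exact mul_le_mul_of_nonneg_left hinv hc0.le
      -- main estimate
      have hmain : c * ((n:ℝ)/((n:ℝ)+1)) ^ (p-1) ≤
          r (((n:ℝ)+c) ^ p) / (s⁻¹ * (((n:ℝ)+c) ^ p) ^ (1-s)) := by
        rw [hrz, hden_eq, le_div_iff₀ (by positivity)]
        have E1 : ((n:ℝ)/((n:ℝ)+1)) ^ (p-1) ≤ ((n:ℝ)/((n:ℝ)+c)) ^ (p-1) := by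
          apply Real.rpow_le_rpow (by positivity) _ (by linarith)
          apply div_le_div_of_nonneg_left hn0.le (by linarith) (by linarith)
        have E2 : ((n:ℝ)/((n:ℝ)+c)) ^ (p-1) * ((n:ℝ)+c) ^ (p-1) = (n:ℝ) ^ (p-1) := by
          rw [← Real.mul_rpow (by positivity) (by linarith), div_mul_cancel₀ _ (by linarith : (n:ℝ)+c ≠ 0)]
        have E3 := bern_low hp1.le hn1 hc0.le
        calc c * ((n:ℝ)/((n:ℝ)+1)) ^ (p-1) * (p * ((n:ℝ)+c) ^ (p-1))
            ≤ c * ((n:ℝ)/((n:ℝ)+c)) ^ (p-1) * (p * ((n:ℝ)+c) ^ (p-1)) := by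
              apply mul_le_mul_of_nonneg_right _ (by positivity)
              exact mul_le_mul_of_nonneg_left E1 hc0.le
          _ = p * c * (((n:ℝ)/((n:ℝ)+c)) ^ (p-1) * ((n:ℝ)+c) ^ (p-1)) := by ring
          _ = p * c * (n:ℝ) ^ (p-1) := by rw [E2]
          _ ≤ ((n:ℝ)+c) ^ p - (n:ℝ) ^ p := by linarith
      linarith [claim2, hmain]
  -- assemble
  refine ⟨hnonneg, ?_, ?_⟩
  · apply le_antisymm
    · exact liminf_le_of_frequently_le freq0 bddB
    · exact le_liminf_of_le bddA.isCoboundedUnder_ge evGE0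
  · apply le_antisymm
    · apply le_of_forall_pos_le_add
      intro ε hε
      exact limsup_le_of_le bddB.isCoboundedUnder_le (evLE ε hε)
    · apply le_of_forall_pos_le_add
      intro ε hε
      have hε' : 0 < min ε (1/2) := lt_min hε (by norm_num)
      have h := le_limsup_of_frequently_le (freq1 (min ε (1/2)) hε' (min_le_right _ _)) bddA
      have : min ε (1/2) ≤ ε := min_le_left _ _
      linarith
end

section
/- Let $Z$ follow a Pareto distribution with $\mathbb{P}[Z > t] = t^{-\alpha}$ for $t \ge 1$ ($\alpha > 0$), let $s \in (0,1]$, and define $X = \lfloor Z^s \rfloor^{1/s} + \frac{1}{2}(Z - \lfloor Z^s \rfloor^{1/s})$ with distribution function $H$. Then $1 - H$ is regularly varying with index $-\alpha$: for every $x > 0$, $(1 - H(tx))/(1 - H(t)) \to x^{-\alpha}$ as $t \to \infty$. -/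
open MeasureTheory ProbabilityTheory Real Filter

/-- The counter-example distribution has a regularly varying survival function
with index `-α`. -/
theorem stmt_15 {Ω : Type*} [MeasureSpace Ω] [IsProbabilityMeasure (ℙ : Measure Ω)]
    (α s : ℝ) (hα : 0 < α) (hs0 : 0 < s) (hs1 : s ≤ 1)
    (Z : Ω → ℝ) (hZmeas : Measurable Z)
    (hZ1 : ∀ ω, 1 ≤ Z ω)
    (hPareto : ∀ t : ℝ, 1 ≤ t → (ℙ {ω | t < Z ω}).toReal = t ^ (-α))
    (X : Ω → ℝ)
    (hX : ∀ ω, X ω = ((⌊(Z ω) ^ s⌋ : ℝ)) ^ (1 / s)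
      + (1 / 2) * (Z ω - ((⌊(Z ω) ^ s⌋ : ℝ)) ^ (1 / s)))
    (H : ℝ → ℝ) (hH : ∀ t, H t = (ℙ {ω | X ω ≤ t}).toReal) :
    ∀ x : ℝ, 0 < x →
      Tendsto (fun t => (1 - H (t * x)) / (1 - H t)) atTop (nhds (x ^ (-α))) := by
  intro x hx
  have hs : s ≠ 0 := ne_of_gt hs0
  -- basic facts about the floor part
  have hfloor1 : ∀ ω, (1 : ℤ) ≤ ⌊(Z ω) ^ s⌋ := by
    intro ω
    rw [Int.le_floor]
    push_cast
    exact Real.one_le_rpow (hZ1 ω) hs0.le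
  have hfpos : ∀ ω, (0 : ℝ) ≤ ((⌊(Z ω) ^ s⌋ : ℤ) : ℝ) := by
    intro ω
    exact_mod_cast (zero_le_one.trans (hfloor1 ω) : (0:ℤ) ≤ _)
  have hfZ : ∀ ω, ((⌊(Z ω) ^ s⌋ : ℝ)) ^ (1 / s) ≤ Z ω := by
    intro ω
    have hZ0 : (0:ℝ) ≤ Z ω := zero_le_one.trans (hZ1 ω)
    calc ((⌊(Z ω) ^ s⌋ : ℝ)) ^ (1 / s)
        ≤ ((Z ω) ^ s) ^ (1 / s) :=
          Real.rpow_le_rpow (hfpos ω) (Int.floor_le _) (by positivity)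
      _ = Z ω := by
          rw [← Real.rpow_mul hZ0, mul_one_div_cancel hs, Real.rpow_one]
  have hXZ : ∀ ω, X ω ≤ Z ω := by
    intro ω; rw [hX ω]; linarith [hfZ ω]
  have hXf : ∀ ω, ((⌊(Z ω) ^ s⌋ : ℝ)) ^ (1 / s) ≤ X ω := by
    intro ω; rw [hX ω]; linarith [hfZ ω]
  -- measurability of X
  have hXmeas : Measurable X := by
    have hXeq : X = fun ω => ((⌊(Z ω) ^ s⌋ : ℝ)) ^ (1 / s)
        + (1 / 2) * (Z ω - ((⌊(Z ω) ^ s⌋ : ℝ)) ^ (1 / s)) := funext hX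
    rw [hXeq]
    have hZs : Measurable fun ω => (Z ω) ^ s :=
      (Real.continuous_rpow_const hs0.le).measurable.comp hZmeas
    have hfl : Measurable fun ω => ((⌊(Z ω) ^ s⌋ : ℤ) : ℝ) :=
      (measurable_from_top (f := ((↑) : ℤ → ℝ))).comp (Int.measurable_floor.comp hZs)
    have hflr : Measurable fun ω => ((⌊(Z ω) ^ s⌋ : ℝ)) ^ (1 / s) :=
      (Real.continuous_rpow_const (by positivity : (0:ℝ) ≤ 1 / s)).measurable.comp hfl
    exact hflr.add (measurable_const.mul (hZmeas.sub hflr))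
  -- survival function representation
  have hsurv : ∀ t : ℝ, 1 - H t = (ℙ {ω | t < X ω}).toReal := by
    intro t
    have hms : MeasurableSet {ω | X ω ≤ t} := measurableSet_le hXmeas measurable_const
    have hc : {ω | t < X ω} = {ω | X ω ≤ t}ᶜ := by ext ω; simp [not_le]
    rw [hH t, hc, prob_compl_eq_one_sub hms,
      ENNReal.toReal_sub_of_le prob_le_one ENNReal.one_ne_top, ENNReal.toReal_one]
  -- upper bound for the survival function
  have hupper : ∀ t : ℝ, 1 ≤ t → (ℙ {ω | t < X ω}).toReal ≤ t ^ (-α) := by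
    intro t ht
    rw [← hPareto t ht]
    exact ENNReal.toReal_mono (measure_ne_top _ _)
      (measure_mono fun ω h => lt_of_lt_of_le h (hXZ ω))
  -- lower bound for the survival function
  have hlower : ∀ t : ℝ, 1 ≤ t →
      ((t ^ s + 1) ^ (1 / s)) ^ (-α) ≤ (ℙ {ω | t < X ω}).toReal := by
    intro t ht
    have ht0 : (0:ℝ) ≤ t := zero_le_one.trans ht
    set c : ℝ := ((⌊t ^ s⌋ : ℤ) : ℝ) + 1 with hc_def
    have hts1 : (1:ℝ) ≤ t ^ s := Real.one_le_rpow ht hs0.le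
    have hc1 : (1:ℝ) ≤ c := by
      have h1 : (1:ℤ) ≤ ⌊t ^ s⌋ := by rw [Int.le_floor]; push_cast; exact hts1
      have h2 : (1:ℝ) ≤ ((⌊t ^ s⌋ : ℤ) : ℝ) := by exact_mod_cast h1
      simp only [hc_def]; linarith
    have hc0 : (0:ℝ) ≤ c := zero_le_one.trans hc1
    have hc1s : (1:ℝ) ≤ c ^ (1 / s) := Real.one_le_rpow hc1 (by positivity)
    have step1 : ((t ^ s + 1) ^ (1 / s)) ^ (-α) ≤ (c ^ (1 / s)) ^ (-α) := by
      apply Real.rpow_le_rpow_of_nonpos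
      · exact Real.rpow_pos_of_pos (lt_of_lt_of_le zero_lt_one hc1) _
      · apply Real.rpow_le_rpow hc0 _ (by positivity)
        have := Int.floor_le (t ^ s)
        simp only [hc_def]; linarith
      · linarith
    refine step1.trans ?_
    rw [← hPareto _ hc1s]
    refine ENNReal.toReal_mono (measure_ne_top _ _) (measure_mono ?_)
    intro ω h
    have h : c ^ (1 / s) < Z ω := h
    have h1 : c < (Z ω) ^ s := by
      have h2 := Real.rpow_lt_rpow (by positivity) h hs0
      rwa [← Real.rpow_mul hc0, one_div_mul_cancel hs, Real.rpow_one] at h2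
    have h2 : (⌊t ^ s⌋ : ℤ) + 1 ≤ ⌊(Z ω) ^ s⌋ := by
      rw [Int.le_floor]; push_cast
      simp only [hc_def] at h1; exact_mod_cast h1.le
    have h3 : t ^ s < ((⌊(Z ω) ^ s⌋ : ℤ) : ℝ) := by
      have h4 := Int.lt_floor_add_one (t ^ s)
      have h2' : (((⌊t ^ s⌋ : ℤ) : ℝ) + 1) ≤ ((⌊(Z ω) ^ s⌋ : ℤ) : ℝ) := by exact_mod_cast h2
      linarith
    have h4 : t < ((⌊(Z ω) ^ s⌋ : ℝ)) ^ (1 / s) := by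
      have h5 := Real.rpow_lt_rpow (by positivity) h3 (by positivity : (0:ℝ) < 1 / s)
      rwa [← Real.rpow_mul ht0, mul_one_div_cancel hs, Real.rpow_one] at h5
    exact lt_of_lt_of_le h4 (hXf ω)
  -- positivity of the lower bound
  have hposl : ∀ t : ℝ, 1 ≤ t → (0:ℝ) < ((t ^ s + 1) ^ (1 / s)) ^ (-α) := by
    intro t ht
    have h1 : (0:ℝ) < t ^ s + 1 := by positivity
    exact Real.rpow_pos_of_pos (Real.rpow_pos_of_pos h1 _) _
  -- limit machinery
  have hxs : (0:ℝ) < x ^ s := Real.rpow_pos_of_pos hx s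
  have hcont : ContinuousAt (fun y : ℝ => y ^ (-(α / s))) (x ^ s) :=
    Real.continuousAt_rpow_const _ _ (Or.inl hxs.ne')
  have hlimval : (x ^ s) ^ (-(α / s)) = x ^ (-α) := by
    rw [← Real.rpow_mul hx.le]
    congr 1
    field_simp
    try ring
  have htneg : Tendsto (fun t : ℝ => t ^ (-s)) atTop (nhds 0) := tendsto_rpow_neg_atTop hs0
  -- lower bound function tends to the limit
  have hL : Tendsto (fun t : ℝ => (((t * x) ^ s + 1) ^ (1 / s)) ^ (-α) / t ^ (-α))
      atTop (nhds (x ^ (-α))) := by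
    have hinner : Tendsto (fun t : ℝ => x ^ s + t ^ (-s)) atTop (nhds (x ^ s)) := by
      simpa using tendsto_const_nhds.add htneg
    have hG : Tendsto (fun t : ℝ => (x ^ s + t ^ (-s)) ^ (-(α / s))) atTop
        (nhds ((x ^ s) ^ (-(α / s)))) := hcont.tendsto.comp hinner
    rw [hlimval] at hG
    refine hG.congr' ?_
    filter_upwards [eventually_gt_atTop (0:ℝ)] with t ht0
    have htx0 : (0:ℝ) < t * x := mul_pos ht0 hx
    have hts0 : (0:ℝ) < t ^ s := Real.rpow_pos_of_pos ht0 s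
    have e1 : (((t * x) ^ s + 1) ^ (1 / s)) ^ (-α) = ((t * x) ^ s + 1) ^ (-(α / s)) := by
      rw [← Real.rpow_mul (by positivity)]
      congr 1; ring
    have e2 : t ^ (-α) = (t ^ s) ^ (-(α / s)) := by
      rw [← Real.rpow_mul ht0.le]
      congr 1; field_simp; try ring
    have e3 : ((t * x) ^ s + 1) / t ^ s = x ^ s + t ^ (-s) := by
      have hmul : (t * x) ^ s = t ^ s * x ^ s := Real.mul_rpow ht0.le hx.le
      have hneg : t ^ (-s) = (t ^ s)⁻¹ := Real.rpow_neg ht0.le s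
      rw [hmul, hneg]
      field_simp
    rw [← e3, e1, e2, ← Real.div_rpow (by positivity) hts0.le]
  -- upper bound function tends to the limit
  have hU : Tendsto (fun t : ℝ => (t * x) ^ (-α) / ((t ^ s + 1) ^ (1 / s)) ^ (-α))
      atTop (nhds (x ^ (-α))) := by
    have hinner : Tendsto (fun t : ℝ => x ^ s / (1 + t ^ (-s))) atTop (nhds (x ^ s)) := by
      have h1 : Tendsto (fun t : ℝ => (1:ℝ) + t ^ (-s)) atTop (nhds 1) := by
        simpa using tendsto_const_nhds.add htneg
      have h2 := (tendsto_const_nhds (x := x ^ s)).div h1 one_ne_zero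
      rw [div_one] at h2
      exact h2
    have hG : Tendsto (fun t : ℝ => (x ^ s / (1 + t ^ (-s))) ^ (-(α / s))) atTop
        (nhds ((x ^ s) ^ (-(α / s)))) := hcont.tendsto.comp hinner
    rw [hlimval] at hG
    refine hG.congr' ?_
    filter_upwards [eventually_gt_atTop (0:ℝ)] with t ht0
    have htx0 : (0:ℝ) < t * x := mul_pos ht0 hx
    have hts0 : (0:ℝ) < t ^ s := Real.rpow_pos_of_pos ht0 s
    have e1 : ((t ^ s + 1) ^ (1 / s)) ^ (-α) = (t ^ s + 1) ^ (-(α / s)) := by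
      rw [← Real.rpow_mul (by positivity)]
      congr 1; ring
    have e2 : (t * x) ^ (-α) = ((t * x) ^ s) ^ (-(α / s)) := by
      rw [← Real.rpow_mul htx0.le]
      congr 1; field_simp; try ring
    have e3 : (t * x) ^ s / (t ^ s + 1) = x ^ s / (1 + t ^ (-s)) := by
      have hmul : (t * x) ^ s = t ^ s * x ^ s := Real.mul_rpow ht0.le hx.le
      have hneg : t ^ (-s) = (t ^ s)⁻¹ := Real.rpow_neg ht0.le s
      rw [hmul, hneg]
      rw [div_eq_div_iff (by positivity) (by positivity)]
      field_simp
    rw [← e3, e1, e2, ← Real.div_rpow (by positivity) (by positivity)]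
  -- squeeze
  refine tendsto_of_tendsto_of_tendsto_of_le_of_le' hL hU ?_ ?_
  · filter_upwards [eventually_ge_atTop (max 1 x⁻¹)] with t ht
    have ht1 : (1:ℝ) ≤ t := le_trans (le_max_left _ _) ht
    have htx1 : (1:ℝ) ≤ t * x := by
      have h1 : x⁻¹ ≤ t := le_trans (le_max_right _ _) ht
      have h2 := mul_le_mul_of_nonneg_right h1 hx.le
      rwa [inv_mul_cancel₀ hx.ne'] at h2
    rw [hsurv (t * x), hsurv t]
    exact div_le_div₀ ENNReal.toReal_nonneg (hlower (t * x) htx1)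
      (lt_of_lt_of_le (hposl t ht1) (hlower t ht1)) (hupper t ht1)
  · filter_upwards [eventually_ge_atTop (max 1 x⁻¹)] with t ht
    have ht1 : (1:ℝ) ≤ t := le_trans (le_max_left _ _) ht
    have htx1 : (1:ℝ) ≤ t * x := by
      have h1 : x⁻¹ ≤ t := le_trans (le_max_right _ _) ht
      have h2 := mul_le_mul_of_nonneg_right h1 hx.le
      rwa [inv_mul_cancel₀ hx.ne'] at h2
    rw [hsurv (t * x), hsurv t]
    exact div_le_div₀ (Real.rpow_nonneg (by positivity) _) (hupper (t * x) htx1)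
      (hposl t ht1) (hlower t ht1)
end
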